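/- arXiv:quant-ph/9904108 — 2 statements merged into one kernel-verified Lean document; each statement's English description precedes it below -/
import Mathlib

section
/- For any trace-preserving positive linear map G on 2×2 complex matrices and any two one-qubit density matrices ρ and τ, the trace norm of G(ρ) − G(τ) is at most the trace norm of ρ − τ. -/
open Matrix
open scoped ComplexOrder

/-- A one-qubit density matrix: Hermitian positive semidefinite with trace 1. -/
def IsDensity (ρ : Matrix (Fin 2) (Fin 2) ℂ) : Prop :=
  ρ.PosSemidef ∧ ρ.trace = 1

/-- The trace norm ‖V‖₁ = Tr √(V†V). -/
noncomputable def traceNorm (V : Matrix (Fin 2) (Fin 2) ℂ) : ℝ :=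
  (((Matrix.posSemidef_conjTranspose_mul_self V).1.eigenvectorUnitary.1 *
      diagonal (((↑) : ℝ → ℂ) ∘ Real.sqrt ∘ (Matrix.posSemidef_conjTranspose_mul_self V).1.eigenvalues) *
      (star (Matrix.posSemidef_conjTranspose_mul_self V).1.eigenvectorUnitary :
        Matrix (Fin 2) (Fin 2) ℂ)).trace).re

/-! A traceless Hermitian 2×2 matrix `Δ` satisfies `Δ * Δ = -det Δ • 1`, so `‖Δ‖₁ = 2 √(-det Δ)`
and it suffices to show that `G` does not increase `-det` on differences of states. Split
`ρ - τ = P - Q` with `P, Q ≥ 0` of equal trace `t`, `t² = -det (ρ - τ)`. Rescaling to density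
matrices, `G P` and `G Q` are again positive of trace `t`, and for positive `A`, `B` of trace `c`
the matrix `c • 1 - (A - B) = (c • 1 - A) + B` is positive; its determinant `c² + det (A - B) ≥ 0`
gives `-det (G ρ - G τ) ≤ t²`. -/

namespace Matrix

section RCLike

variable {n 𝕜 : Type*} [Fintype n] [DecidableEq n] [RCLike 𝕜]

theorem IsHermitian.eigenvalues_eq_of_eq_smul_one {A : Matrix n n 𝕜} (hA : A.IsHermitian)
    {c : ℝ} (h : A = (c : 𝕜) • 1) (i : n) : hA.eigenvalues i = c := by
  have : Nonempty n := ⟨i⟩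
  have hspec : hA.eigenvalues i ∈ spectrum ℝ ((c : 𝕜) • (1 : Matrix n n 𝕜)) :=
    h ▸ hA.eigenvalues_mem_spectrum_real i
  rwa [← RCLike.real_smul_eq_coe_smul, ← Algebra.algebraMap_eq_smul_one, spectrum.scalar_eq] at hspec

end RCLike

section CommRing

variable {R : Type*} [CommRing R]

theorem mul_self_eq_neg_det_smul_one_of_trace_eq_zero {A : Matrix (Fin 2) (Fin 2) R}
    (h : A.trace = 0) : A * A = -A.det • 1 := by
  rw [trace_fin_two] at h
  ext i j
  fin_cases i <;> fin_cases j <;> simp [mul_apply, det_fin_two]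
  · linear_combination A 0 0 * h
  · linear_combination A 0 1 * h
  · linear_combination A 1 0 * h
  · linear_combination A 1 1 * h

theorem det_smul_one_sub_fin_two (c : R) (A : Matrix (Fin 2) (Fin 2) R) :
    (c • 1 - A).det = c ^ 2 - c * A.trace + A.det := by
  simp [det_fin_two, trace_fin_two]
  ring

end CommRing

section Fin2

variable {A B : Matrix (Fin 2) (Fin 2) ℂ}

theorem IsHermitian.trace_eq_add_eigenvalues (hA : A.IsHermitian) :
    A.trace = ((hA.eigenvalues 0 + hA.eigenvalues 1 : ℝ) : ℂ) := by
  simp [hA.trace_eq_sum_eigenvalues, Fin.sum_univ_two]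

theorem IsHermitian.det_eq_mul_eigenvalues (hA : A.IsHermitian) :
    A.det = ((hA.eigenvalues 0 * hA.eigenvalues 1 : ℝ) : ℂ) := by
  simp [hA.det_eq_prod_eigenvalues, Fin.prod_univ_two]

theorem IsHermitian.posSemidef_iff_fin_two (hA : A.IsHermitian) :
    A.PosSemidef ↔ 0 ≤ A.trace ∧ 0 ≤ A.det := by
  rw [hA.posSemidef_iff_eigenvalues_nonneg, hA.trace_eq_add_eigenvalues,
    hA.det_eq_mul_eigenvalues, Complex.zero_le_real, Complex.zero_le_real, Pi.le_def,
    Fin.forall_fin_two, Pi.zero_apply, Pi.zero_apply]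
  constructor
  · rintro ⟨h0, h1⟩
    exact ⟨add_nonneg h0 h1, mul_nonneg h0 h1⟩
  · rintro ⟨htr, hdet⟩
    constructor <;> nlinarith

theorem IsHermitian.det_nonpos_of_trace_eq_zero (hA : A.IsHermitian) (h : A.trace = 0) :
    A.det ≤ 0 := by
  rw [hA.trace_eq_add_eigenvalues, Complex.ofReal_eq_zero] at h
  rw [hA.det_eq_mul_eigenvalues, ← Complex.ofReal_zero, Complex.real_le_real,
    eq_neg_of_add_eq_zero_right h]
  nlinarith [sq_nonneg (hA.eigenvalues 0)]

theorem IsHermitian.posSemidef_smul_one_sub_iff (hA : A.IsHermitian) {t : ℂ} (ht : 0 ≤ t) :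
    (t • 1 - A).PosSemidef ↔ 0 ≤ 2 * t - A.trace ∧ 0 ≤ t ^ 2 - t * A.trace + A.det := by
  have hH : (t • 1 - A).IsHermitian :=
    ((IsSelfAdjoint.of_nonneg ht).smul (isHermitian_one (α := ℂ))).sub hA
  rw [hH.posSemidef_iff_fin_two, trace_sub, trace_smul, trace_one, det_smul_one_sub_fin_two]
  simp [mul_comm]

theorem PosSemidef.neg_det_sub_le_sq_trace (hA : A.PosSemidef) (hB : B.PosSemidef)
    (h : A.trace = B.trace) : -(A - B).det ≤ A.trace ^ 2 := by
  set c := A.trace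
  have hc : 0 ≤ c := hA.trace_nonneg
  have hcompl : (c • 1 - A).PosSemidef := by
    refine (hA.1.posSemidef_smul_one_sub_iff hc).2 ⟨?_, ?_⟩
    · rwa [two_mul, add_sub_cancel_right]
    · rw [sq, sub_self, zero_add]
      exact hA.det_nonneg
  have hR := (hcompl.add hB).det_nonneg
  rw [sub_add, det_smul_one_sub_fin_two, trace_sub, ← h, sub_self, mul_zero, sub_zero] at hR
  exact neg_le_iff_add_nonneg.2 hR

theorem IsHermitian.posSemidef_smul_one_sub_of_trace_eq_zero (hA : A.IsHermitian)
    (h : A.trace = 0) {t : ℂ} (ht : 0 ≤ t) (ht2 : t ^ 2 = -A.det) : (t • 1 - A).PosSemidef := by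
  refine (hA.posSemidef_smul_one_sub_iff ht).2 ⟨?_, ?_⟩
  · rw [h, sub_zero]
    exact mul_nonneg zero_le_two ht
  · rw [h, mul_zero, sub_zero, ht2, neg_add_cancel]

theorem IsHermitian.exists_posSemidef_sub_of_trace_eq_zero (hA : A.IsHermitian)
    (h : A.trace = 0) :
    ∃ P Q : Matrix (Fin 2) (Fin 2) ℂ, P.PosSemidef ∧ Q.PosSemidef ∧ P.trace = Q.trace ∧
      P.trace ^ 2 = -A.det ∧ A = P - Q := by
  obtain ⟨hre, him⟩ := Complex.nonneg_iff.1 (neg_nonneg.2 (hA.det_nonpos_of_trace_eq_zero h))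
  set t : ℂ := ((√(-A.det).re : ℝ) : ℂ)
  have ht : 0 ≤ t := Complex.zero_le_real.2 (Real.sqrt_nonneg _)
  have ht2 : t ^ 2 = -A.det := by
    rw [← Complex.ofReal_pow, Real.sq_sqrt hre]
    exact Complex.ext rfl him
  have hP := hA.neg.posSemidef_smul_one_sub_of_trace_eq_zero (by simp [h]) ht
    (by simpa [det_neg] using ht2)
  have hQ := hA.posSemidef_smul_one_sub_of_trace_eq_zero h ht ht2
  have hhalf : (0 : ℂ) ≤ 2⁻¹ := by positivity
  have htrP : ((2⁻¹ : ℂ) • (t • 1 - -A)).trace = t := by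
    simp [h]
    ring
  have htrQ : ((2⁻¹ : ℂ) • (t • 1 - A)).trace = t := by
    simp [h]
    ring
  refine ⟨_, _, hP.smul hhalf, hQ.smul hhalf, htrP.trans htrQ.symm, by rw [htrP, ht2], ?_⟩
  module

end Fin2

end Matrix

theorem traceNorm_eq_sum_sqrt_eigenvalues (V : Matrix (Fin 2) (Fin 2) ℂ) :
    traceNorm V = ∑ i, √((posSemidef_conjTranspose_mul_self V).1.eigenvalues i) := by
  rw [traceNorm, trace_mul_cycle, Unitary.coe_star_mul_self, one_mul, trace_diagonal]
  simp

theorem traceNorm_eq_of_conjTranspose_mul_self_eq_smul_one {V : Matrix (Fin 2) (Fin 2) ℂ}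
    {k : ℝ} (h : Vᴴ * V = (k : ℂ) • 1) : traceNorm V = 2 * √k := by
  rw [traceNorm_eq_sum_sqrt_eigenvalues, Fin.sum_univ_two,
    IsHermitian.eigenvalues_eq_of_eq_smul_one _ h, IsHermitian.eigenvalues_eq_of_eq_smul_one _ h]
  ring

theorem Matrix.IsHermitian.traceNorm_of_trace_eq_zero {A : Matrix (Fin 2) (Fin 2) ℂ}
    (hA : A.IsHermitian) (h : A.trace = 0) : traceNorm A = 2 * √(-A.det).re := by
  apply traceNorm_eq_of_conjTranspose_mul_self_eq_smul_one
  rw [hA.eq, mul_self_eq_neg_det_smul_one_of_trace_eq_zero h, hA.det_eq_mul_eigenvalues]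
  simp

theorem Matrix.PosSemidef.map_of_preserves_isDensity
    {G : Matrix (Fin 2) (Fin 2) ℂ →ₗ[ℂ] Matrix (Fin 2) (Fin 2) ℂ}
    (hG : ∀ ρ, IsDensity ρ → IsDensity (G ρ)) {A : Matrix (Fin 2) (Fin 2) ℂ}
    (hA : A.PosSemidef) : (G A).PosSemidef ∧ (G A).trace = A.trace := by
  obtain hzero | hne := eq_or_ne A.trace 0
  · simp [hA.trace_eq_zero_iff.1 hzero, PosSemidef.zero]
  have hρ : IsDensity (A.trace⁻¹ • A) :=
    ⟨hA.smul (inv_nonneg.2 hA.trace_nonneg), by rw [trace_smul, smul_eq_mul, inv_mul_cancel₀ hne]⟩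
  have hGA : G A = A.trace • G (A.trace⁻¹ • A) := by
    rw [map_smul, smul_smul, mul_inv_cancel₀ hne, one_smul]
  rw [hGA, trace_smul, (hG _ hρ).2, smul_eq_mul, mul_one]
  exact ⟨(hG _ hρ).1.smul hA.trace_nonneg, rfl⟩

theorem positive_map_trace_norm_contraction_general
    (G : Matrix (Fin 2) (Fin 2) ℂ →ₗ[ℂ] Matrix (Fin 2) (Fin 2) ℂ)
    (hPos : ∀ ρ, IsDensity ρ → IsDensity (G ρ))
    (ρ τ : Matrix (Fin 2) (Fin 2) ℂ) (hρ : IsDensity ρ) (hτ : IsDensity τ) :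
    traceNorm (G ρ - G τ) ≤ traceNorm (ρ - τ) := by
  have hΔ : (ρ - τ).IsHermitian := hρ.1.1.sub hτ.1.1
  have hΔtr : (ρ - τ).trace = 0 := by rw [trace_sub, hρ.2, hτ.2, sub_self]
  have hGΔ : (G ρ - G τ).IsHermitian := (hPos ρ hρ).1.1.sub (hPos τ hτ).1.1
  have hGΔtr : (G ρ - G τ).trace = 0 := by rw [trace_sub, (hPos ρ hρ).2, (hPos τ hτ).2, sub_self]
  obtain ⟨P, Q, hP, hQ, htr, hsq, hPQ⟩ := hΔ.exists_posSemidef_sub_of_trace_eq_zero hΔtr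
  obtain ⟨hGP, hGPtr⟩ := hP.map_of_preserves_isDensity hPos
  obtain ⟨hGQ, hGQtr⟩ := hQ.map_of_preserves_isDensity hPos
  have hdet : -(G ρ - G τ).det ≤ -(ρ - τ).det :=
    calc -(G ρ - G τ).det = -(G P - G Q).det := by rw [← map_sub, hPQ, map_sub]
      _ ≤ (G P).trace ^ 2 := hGP.neg_det_sub_le_sq_trace hGQ (by rw [hGPtr, hGQtr, htr])
      _ = -(ρ - τ).det := by rw [hGPtr, hsq]
  rw [hGΔ.traceNorm_of_trace_eq_zero hGΔtr, hΔ.traceNorm_of_trace_eq_zero hΔtr]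
  gcongr

theorem positive_map_trace_norm_contraction
    (G : Matrix (Fin 2) (Fin 2) ℂ →ₗ[ℂ] Matrix (Fin 2) (Fin 2) ℂ)
    (hTP : ∀ A : Matrix (Fin 2) (Fin 2) ℂ, (G A).trace = A.trace)
    (hPos : ∀ ρ, IsDensity ρ → IsDensity (G ρ))
    (ρ τ : Matrix (Fin 2) (Fin 2) ℂ) (hρ : IsDensity ρ) (hτ : IsDensity τ) :
    traceNorm (G ρ - G τ) ≤ traceNorm (ρ - τ) :=
  positive_map_trace_norm_contraction_general G hPos ρ τ hρ hτ
end

section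
/- Let α ∈ (0,π] with α/π rational, θ ∈ (0,π/2], and α' ∈ (−π,π], θ' ∈ (0,π/2]. Define z_k(α,θ) = cos²θ + sin²θ·cos(kα), and let n_α be the least positive integer n with nα ≡ 0 (mod 2π). If z_k(α,θ) = z_k(α',θ') for all k ∈ {1,…,n_α}, then |α'| = α and θ' = θ. -/
/-- z_k(α,θ) = cos²θ + sin²θ·cos(kα). -/
noncomputable def zCoord (k : ℕ) (α θ : ℝ) : ℝ :=
  Real.cos θ ^ 2 + Real.sin θ ^ 2 * Real.cos (k * α)

lemma sum_cos_zero (α : ℝ) (n : ℕ) (h1 : Real.cos α ≠ 1)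
    (hcn : Real.cos ((n : ℝ) * α) = 1) :
    ∑ k ∈ Finset.Icc 1 n, Real.cos ((k : ℝ) * α) = 0 := by
  set z : ℂ := Complex.exp ((α : ℂ) * Complex.I) with hzdef
  have hzpow : ∀ k : ℕ, z ^ k = Complex.exp (((k : ℝ) * α : ℝ) * Complex.I) := by
    intro k
    rw [hzdef, ← Complex.exp_nat_mul]
    push_cast
    ring_nf
  have hz1 : z ≠ 1 := by
    intro h
    apply h1
    rw [← Complex.exp_ofReal_mul_I_re α]
    rw [hzdef] at h
    rw [h]
    simp
  have hzn : z ^ n = 1 := by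
    obtain ⟨m, hm⟩ := (Real.cos_eq_one_iff _).mp hcn
    rw [hzpow, Complex.exp_eq_one_iff]
    exact ⟨m, by push_cast [← hm]; ring⟩
  have hsum : ∑ k ∈ Finset.Icc 1 n, z ^ k = 0 := by
    have hg := geom_sum_eq hz1 n
    rw [hzn, sub_self, zero_div] at hg
    have h2 : ∑ k ∈ Finset.Icc 1 n, z ^ k = z * ∑ k ∈ Finset.range n, z ^ k := by
      rw [← Finset.Ico_add_one_right_eq_Icc, Finset.sum_Ico_eq_sum_range, Finset.mul_sum]
      exact Finset.sum_congr rfl fun i _ => by rw [pow_add, pow_one]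
    rw [h2, hg, mul_zero]
  have h3 := congrArg Complex.re hsum
  rw [Complex.re_sum] at h3
  simp only [Complex.zero_re] at h3
  rw [← h3]
  exact Finset.sum_congr rfl fun k _ => by rw [hzpow, Complex.exp_ofReal_mul_I_re]

theorem unicity_of_angles (α θ α' θ' : ℝ) (n : ℕ)
    (hα : α ∈ Set.Ioc 0 Real.pi) (hrat : ∃ q : ℚ, α = q * Real.pi)
    (hθ : θ ∈ Set.Ioc 0 (Real.pi / 2))
    (hα' : α' ∈ Set.Ioc (-Real.pi) Real.pi) (hθ' : θ' ∈ Set.Ioc 0 (Real.pi / 2))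
    (hn : 0 < n) (hnmul : ∃ m : ℤ, (n : ℝ) * α = m * (2 * Real.pi))
    (hnmin : ∀ n' : ℕ, 0 < n' → n' < n → ¬ ∃ m : ℤ, (n' : ℝ) * α = m * (2 * Real.pi))
    (hz : ∀ k ∈ Finset.Icc 1 n, zCoord k α θ = zCoord k α' θ') :
    |α'| = α ∧ θ' = θ := by
  have hpi := Real.pi_pos
  obtain ⟨hα0, hαπ⟩ := hα
  obtain ⟨hθ0, hθπ⟩ := hθ
  obtain ⟨hα'0, hα'π⟩ := hα'
  obtain ⟨hθ'0, hθ'π⟩ := hθ'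
  have hsθ : 0 < Real.sin θ := Real.sin_pos_of_pos_of_lt_pi hθ0 (by linarith)
  have hsθ' : 0 < Real.sin θ' := Real.sin_pos_of_pos_of_lt_pi hθ'0 (by linarith)
  -- cos α ≠ 1
  have hcα : Real.cos α ≠ 1 := by
    intro h
    obtain ⟨m, hm⟩ := (Real.cos_eq_one_iff _).mp h
    rcases le_or_gt m 0 with hm0 | hm0
    · have hc : (m : ℝ) ≤ 0 := by exact_mod_cast hm0
      nlinarith
    · have hc : (1 : ℝ) ≤ (m : ℝ) := by exact_mod_cast hm0
      nlinarith
  -- cos (n α) = 1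
  obtain ⟨m, hm⟩ := hnmul
  have hcosnα : Real.cos ((n : ℝ) * α) = 1 := by
    rw [hm]; exact Real.cos_int_mul_two_pi m
  have hnmem : n ∈ Finset.Icc 1 n := Finset.mem_Icc.mpr ⟨hn, le_refl n⟩
  have h1mem : (1 : ℕ) ∈ Finset.Icc 1 n := Finset.mem_Icc.mpr ⟨le_refl 1, hn⟩
  have hpyth : Real.sin θ ^ 2 + Real.cos θ ^ 2 = 1 := Real.sin_sq_add_cos_sq θ
  have hpyth' : Real.sin θ' ^ 2 + Real.cos θ' ^ 2 = 1 := Real.sin_sq_add_cos_sq θ'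
  -- cos (n α') = 1
  have hcosnα' : Real.cos ((n : ℝ) * α') = 1 := by
    have hzn := hz n hnmem
    unfold zCoord at hzn
    rw [hcosnα] at hzn
    have h0 : Real.sin θ' ^ 2 * (1 - Real.cos ((n : ℝ) * α')) = 0 := by
      linear_combination hpyth' - hpyth + hzn
    rcases mul_eq_zero.mp h0 with h | h
    · exact absurd h (by positivity)
    · linarith
  -- cos α' ≠ 1
  have hcα' : Real.cos α' ≠ 1 := by
    intro h
    obtain ⟨j, hj⟩ := (Real.cos_eq_one_iff _).mp h
    have hj0 : j = 0 := by
      rcases lt_trichotomy j 0 with hjc | hjc | hjc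
      · exfalso
        have hjc' : j ≤ -1 := by omega
        have hc : (j : ℝ) ≤ -1 := by exact_mod_cast hjc'
        nlinarith
      · exact hjc
      · exfalso
        have hc : (1 : ℝ) ≤ (j : ℝ) := by exact_mod_cast hjc
        nlinarith
    rw [hj0] at hj
    simp only [Int.cast_zero, zero_mul] at hj
    -- α' = 0, use k = 1
    have hz1 := hz 1 h1mem
    unfold zCoord at hz1
    rw [← hj] at hz1
    simp only [Nat.cast_one, one_mul, mul_zero, Real.cos_zero, mul_one] at hz1
    apply hcα
    have h0 : Real.sin θ ^ 2 * (Real.cos α - 1) = 0 := by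
      linear_combination hz1 - hpyth + hpyth'
    rcases mul_eq_zero.mp h0 with h' | h'
    · exact absurd h' (by positivity)
    · linarith
  -- the two cosine sums vanish
  have hS : ∑ k ∈ Finset.Icc 1 n, Real.cos ((k : ℝ) * α) = 0 :=
    sum_cos_zero α n hcα hcosnα
  have hS' : ∑ k ∈ Finset.Icc 1 n, Real.cos ((k : ℝ) * α') = 0 :=
    sum_cos_zero α' n hcα' hcosnα'
  -- sum the hypothesis
  have hsum : ∑ k ∈ Finset.Icc 1 n, zCoord k α θ = ∑ k ∈ Finset.Icc 1 n, zCoord k α' θ' :=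
    Finset.sum_congr rfl hz
  have hcard : (Finset.Icc 1 n).card = n := by simp
  have hLHS : ∑ k ∈ Finset.Icc 1 n, zCoord k α θ = n * Real.cos θ ^ 2 := by
    unfold zCoord
    rw [Finset.sum_add_distrib, ← Finset.mul_sum, hS, Finset.sum_const, hcard]
    push_cast; ring
  have hRHS : ∑ k ∈ Finset.Icc 1 n, zCoord k α' θ' = n * Real.cos θ' ^ 2 := by
    unfold zCoord
    rw [Finset.sum_add_distrib, ← Finset.mul_sum, hS', Finset.sum_const, hcard]
    push_cast; ring
  have hn' : (0 : ℝ) < n := by exact_mod_cast hn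
  have hcos2 : Real.cos θ ^ 2 = Real.cos θ' ^ 2 := by
    rw [hLHS, hRHS] at hsum
    exact mul_left_cancel₀ hn'.ne' hsum
  have hcosθnn : 0 ≤ Real.cos θ := Real.cos_nonneg_of_mem_Icc ⟨by linarith, hθπ⟩
  have hcosθ'nn : 0 ≤ Real.cos θ' := Real.cos_nonneg_of_mem_Icc ⟨by linarith, hθ'π⟩
  have hcosθ : Real.cos θ' = Real.cos θ := by nlinarith
  have hθeq : θ' = θ :=
    Real.injOn_cos ⟨le_of_lt hθ'0, by linarith⟩ ⟨le_of_lt hθ0, by linarith⟩ hcosθ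
  -- k = 1 gives cos α = cos α'
  have hz1 := hz 1 h1mem
  unfold zCoord at hz1
  simp only [Nat.cast_one, one_mul] at hz1
  rw [hθeq] at hz1
  have hcoseq : Real.cos α' = Real.cos α := by
    have := mul_left_cancel₀ (by positivity : Real.sin θ ^ 2 ≠ 0)
      (by linarith : Real.sin θ ^ 2 * Real.cos α = Real.sin θ ^ 2 * Real.cos α')
    linarith
  refine ⟨?_, hθeq⟩
  have habs : |α'| ∈ Set.Icc 0 Real.pi := ⟨abs_nonneg _, abs_le.mpr ⟨by linarith, hα'π⟩⟩
  exact Real.injOn_cos habs ⟨le_of_lt hα0, hαπ⟩ (by rw [Real.cos_abs, hcoseq])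
end
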